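/- Let q > 1. Then the limit lim_{N→∞} ‖D_N‖_{L^q} / N^{1−1/q} exists, is finite, and equals γ(q) = ((1/π) ∫_{−∞}^{+∞} |sin(x)/x|^q dx)^{1/q}. -/

import Mathlib

/-!
Substituting `t = 2u/N` gives `‖D_N‖_q^q = N^(q-1) π⁻¹ ∫ F_N`, where
`F_N(u) = |sin u / (N sin (u/N))|^q` on `[-Nπ/2, Nπ/2]` and `0` elsewhere. As `N → ∞`,
`N sin (u/N) → u`, so `F_N → |sin u / u|^q` pointwise, and Jordan's inequality
`|sin x| ≥ 2|x|/π` on `[-π/2, π/2]` gives the domination `F_N ≤ (π/2)^q |sin u / u|^q`, which is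
integrable since `q > 1`. Dominated convergence then identifies the limit.
-/

/-- The Dirichlet kernel `D_N(t) = sin(Nt/2)/sin(t/2)`. -/
noncomputable def dirichlet (N : ℕ) (t : ℝ) : ℝ :=
  Real.sin (N * t / 2) / Real.sin (t / 2)

/-- The (normalized) `L^q` norm over `[-π,π]`, for a finite exponent `q`. -/
noncomputable def LqNorm (q : ℝ) (f : ℝ → ℝ) : ℝ :=
  ((2 * Real.pi)⁻¹ * ∫ t in (-Real.pi)..Real.pi, |f t| ^ q) ^ (1 / q)

open MeasureTheory Real Filter Set Topology

lemma abs_sin_div_le_two_div_one_add_abs (x : ℝ) : |sin x / x| ≤ 2 / (1 + |x|) := by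
  rcases eq_or_ne x 0 with rfl | hx
  · simp
  have hx' : 0 < |x| := abs_pos.mpr hx
  rw [abs_div, div_le_div_iff₀ hx' (by positivity)]
  nlinarith [abs_sin_le_abs (x := x), abs_sin_le_one x]

lemma integrable_abs_sin_div_rpow {q : ℝ} (hq : 1 < q) :
    Integrable fun x : ℝ => |sin x / x| ^ q := by
  have hq0 : 0 ≤ q := by linarith
  refine ((integrable_one_add_norm (E := ℝ) (μ := volume) (r := q) (by simpa using hq)).const_mul
    (2 ^ q)).mono' ?_ (ae_of_all _ fun x => ?_)
  · exact ((continuous_rpow_const hq0).measurable.comp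
      (measurable_sin.div measurable_id).abs).aestronglyMeasurable
  rw [norm_of_nonneg (by positivity), norm_eq_abs, rpow_neg (by positivity),
    ← inv_rpow (by positivity), ← mul_rpow (by positivity) (by positivity), ← div_eq_mul_inv]
  exact rpow_le_rpow (abs_nonneg _) (abs_sin_div_le_two_div_one_add_abs x) hq0

lemma abs_sin_div_mul_sin_div_le {a u : ℝ} (ha : 0 < a) (hu : |u| ≤ a * π / 2) :
    |sin u / (a * sin (u / a))| ≤ π / 2 * |sin u / u| := by
  rcases eq_or_ne u 0 with rfl | hu0
  · simp
  have hjordan : 2 / π * |u / a| ≤ |sin (u / a)| := by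
    refine mul_abs_le_abs_sin ?_
    rw [abs_div, abs_of_pos ha, div_le_iff₀ ha]
    linarith
  have hden : 2 / π * |u| ≤ |a * sin (u / a)| := by
    rw [abs_mul, abs_of_pos ha, abs_div, abs_of_pos ha] at *
    calc 2 / π * |u| = a * (2 / π * (|u| / a)) := by field_simp
      _ ≤ a * |sin (u / a)| := by gcongr
  calc |sin u / (a * sin (u / a))| = |sin u| / |a * sin (u / a)| := abs_div _ _
    _ ≤ |sin u| / (2 / π * |u|) := by gcongr
    _ = π / 2 * |sin u / u| := by rw [abs_div]; field_simp

lemma tendsto_mul_sin_div_atTop (u : ℝ) :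
    Tendsto (fun a : ℝ => a * sin (u / a)) atTop (𝓝 u) := by
  have hsinc : Tendsto (fun a : ℝ => u * sinc (u / a)) atTop (𝓝 (u * sinc 0)) :=
    ((continuous_sinc.tendsto 0).comp (tendsto_const_nhds.div_atTop tendsto_id)).const_mul u
  rw [sinc_zero, mul_one] at hsinc
  refine hsinc.congr' ?_
  filter_upwards [eventually_gt_atTop 0] with a ha
  rcases eq_or_ne u 0 with rfl | hu
  · simp
  rw [sinc_of_ne_zero (div_ne_zero hu ha.ne')]
  field_simp

noncomputable def rescaledDirichletPow (q : ℝ) (N : ℕ) : ℝ → ℝ :=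
  (Ioc (-(N * π / 2)) (N * π / 2)).indicator fun u => |sin u / (N * sin (u / N))| ^ q

lemma abs_dirichlet_two_div_mul_rpow {N : ℕ} (hN : N ≠ 0) (q u : ℝ) :
    |dirichlet N (2 / N * u)| ^ q = (N : ℝ) ^ q * |sin u / (N * sin (u / N))| ^ q := by
  have hN' : (0 : ℝ) < N := by positivity
  have hrescale : dirichlet N (2 / N * u) = N * (sin u / (N * sin (u / N))) := by
    rw [dirichlet, ← mul_div_assoc, mul_div_mul_left _ _ hN'.ne']
    congr 2 <;> field_simp
  rw [hrescale, abs_mul, abs_of_pos hN', mul_rpow hN'.le (abs_nonneg _)]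

lemma integral_abs_dirichlet_rpow {N : ℕ} (hN : N ≠ 0) (q : ℝ) :
    ∫ t in -π..π, |dirichlet N t| ^ q = 2 * (N : ℝ) ^ (q - 1) * ∫ u, rescaledDirichletPow q N u := by
  have hN' : (0 : ℝ) < N := by positivity
  have hbound : -(N * π / 2) ≤ (N : ℝ) * π / 2 := neg_le_self (by positivity)
  have hsubst := intervalIntegral.smul_integral_comp_mul_left (a := -(N * π / 2)) (b := N * π / 2)
    (fun t => |dirichlet N t| ^ q) (2 / N)
  rw [show 2 / (N : ℝ) * -(N * π / 2) = -π by field_simp,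
    show 2 / (N : ℝ) * (N * π / 2) = π by field_simp] at hsubst
  simp_rw [← hsubst, abs_dirichlet_two_div_mul_rpow hN, intervalIntegral.integral_const_mul,
    intervalIntegral.integral_of_le hbound, rescaledDirichletPow, integral_indicator measurableSet_Ioc, smul_eq_mul,
    rpow_sub hN', rpow_one]
  field_simp

lemma rescaledDirichletPow_le {q : ℝ} (hq : 0 ≤ q) (N : ℕ) (u : ℝ) :
    rescaledDirichletPow q N u ≤ (π / 2) ^ q * |sin u / u| ^ q := by
  by_cases hu : u ∈ Ioc (-(N * π / 2)) (N * π / 2)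
  · rcases Nat.eq_zero_or_pos N with rfl | hN
    · simp at hu
    rw [rescaledDirichletPow, indicator_of_mem hu, ← mul_rpow (by positivity) (abs_nonneg _)]
    exact rpow_le_rpow (abs_nonneg _)
      (abs_sin_div_mul_sin_div_le (Nat.cast_pos.mpr hN) (abs_le.mpr ⟨hu.1.le, hu.2⟩)) hq
  · rw [rescaledDirichletPow, indicator_of_notMem hu]
    positivity

lemma tendsto_rescaledDirichletPow {q : ℝ} (hq : 0 < q) (u : ℝ) :
    Tendsto (fun N => rescaledDirichletPow q N u) atTop (𝓝 (|sin u / u| ^ q)) := by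
  rcases eq_or_ne u 0 with rfl | hu
  · simp [rescaledDirichletPow, indicator_apply, zero_rpow hq.ne']
  have hcont : ContinuousAt (fun x : ℝ => |sin u / x| ^ q) u :=
    ((continuousAt_const.div continuousAt_id hu).abs).rpow_const (Or.inr hq.le)
  refine (hcont.tendsto.comp
    ((tendsto_mul_sin_div_atTop u).comp tendsto_natCast_atTop_atTop)).congr' ?_
  have hlarge : Tendsto (fun N : ℕ => (N : ℝ) * π / 2) atTop atTop :=
    (tendsto_natCast_atTop_atTop.atTop_mul_const pi_pos).atTop_div_const two_pos
  filter_upwards [hlarge.eventually_gt_atTop |u|] with N hN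
  have hmem : u ∈ Ioc (-(N * π / 2)) (N * π / 2) := (abs_lt.mp hN).imp_right le_of_lt
  rw [rescaledDirichletPow, indicator_of_mem hmem]
  rfl

lemma tendsto_integral_rescaledDirichletPow {q : ℝ} (hq : 1 < q) :
    Tendsto (fun N => ∫ u, rescaledDirichletPow q N u) atTop
      (𝓝 (∫ u, |sin u / u| ^ q)) := by
  have hq0 : 0 < q := by linarith
  refine tendsto_integral_of_dominated_convergence _ (fun N => ?_)
    ((integrable_abs_sin_div_rpow hq).const_mul ((π / 2) ^ q))
    (fun N => ae_of_all _ fun u => ?_) (ae_of_all _ (tendsto_rescaledDirichletPow hq0))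
  · refine (Measurable.indicator ?_ measurableSet_Ioc).aestronglyMeasurable
    fun_prop
  · rw [Real.norm_eq_abs, abs_of_nonneg ?_]
    · exact rescaledDirichletPow_le hq0.le N u
    · exact indicator_nonneg (fun _ _ => by positivity) u

lemma LqNorm_dirichlet {q : ℝ} (hq : 0 < q) {N : ℕ} (hN : N ≠ 0) :
    LqNorm q (dirichlet N) =
      (π⁻¹ * ∫ u, rescaledDirichletPow q N u) ^ (1 / q) * (N : ℝ) ^ (1 - 1 / q) := by
  have hN' : (0 : ℝ) < N := by positivity
  have hI : 0 ≤ ∫ u, rescaledDirichletPow q N u :=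
    integral_nonneg (indicator_nonneg fun _ _ => by positivity)
  rw [LqNorm, integral_abs_dirichlet_rpow hN,
    show (2 * π)⁻¹ * (2 * (N : ℝ) ^ (q - 1) * ∫ u, rescaledDirichletPow q N u) =
      (π⁻¹ * ∫ u, rescaledDirichletPow q N u) * (N : ℝ) ^ (q - 1) by field_simp,
    mul_rpow (by positivity) (by positivity), ← rpow_mul hN'.le]
  congr 2
  field_simp

/-- For `q > 1`, `‖D_N‖_{L^q} / N^{1-1/q}` converges, as `N → ∞`, to the finite limit
`γ(q) = ((1/π) ∫_{-∞}^{∞} |sin x / x|^q dx)^{1/q}`. -/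
theorem stmt5 (q : ℝ) (hq : 1 < q) :
    Filter.Tendsto
      (fun N : ℕ => LqNorm q (dirichlet N) / (N : ℝ) ^ (1 - 1 / q))
      Filter.atTop
      (nhds (((Real.pi)⁻¹ * ∫ x : ℝ, |Real.sin x / x| ^ q) ^ (1 / q))) := by
  have hq0 : 0 < q := by linarith
  have hcont : Continuous fun x : ℝ => (π⁻¹ * x) ^ (1 / q) :=
    (continuous_const.mul continuous_id).rpow_const fun _ => Or.inr (by positivity)
  refine ((hcont.tendsto _).comp (tendsto_integral_rescaledDirichletPow hq)).congr' ?_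
  filter_upwards [eventually_ne_atTop 0] with N hN
  rw [LqNorm_dirichlet hq0 hN, mul_div_cancel_right₀ _ (by positivity)]
  rfl
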